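/- Let H and K be equivalent complex Hadamard matrices of order n and let 1 ≤ d ≤ n. Then for every nonnegative real number t, the number of pairs (S, T), where S and T are d-element subsets of the row indices and column indices respectively, such that the d×d submatrix of H with rows S and columns T has determinant of absolute value t, equals the corresponding number for K. Equivalently, the multiset of absolute values of d×d minors of H (counted with multiplicity over all choices of d rows and d columns) coincides with that of K; i.e., the fingerprint is invariant under equivalence. -/

import Mathlib

open Matrix

/-- `H` is a complex Hadamard matrix: unimodular entries and `H Hᴴ = n • I`. -/
def IsCHadamard {n : Type*} [Fintype n] [DecidableEq n] (H : Matrix n n ℂ) : Prop :=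
  (∀ i j, ‖H i j‖ = 1) ∧
    H * H.conjTranspose = (Fintype.card n : ℂ) • 1

/-- Equivalence of complex Hadamard matrices: `H = P₁ D₁ K D₂ P₂` with permutation
matrices `P₁, P₂` and unitary diagonal matrices `D₁, D₂`. -/
def HadEquiv {n : Type*} [Fintype n] [DecidableEq n] (H K : Matrix n n ℂ) : Prop :=
  ∃ (σ τ : Equiv.Perm n) (d₁ d₂ : n → ℂ),
    (∀ i, ‖d₁ i‖ = 1) ∧ (∀ i, ‖d₂ i‖ = 1) ∧
    H = σ.permMatrix ℂ * Matrix.diagonal d₁ * K * Matrix.diagonal d₂ * τ.permMatrix ℂ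

/-- The number of pairs `(S, T)` of `d`-element sets of row- and column indices such
that the corresponding `d × d` minor of `H` has absolute value `t`. -/
noncomputable def minorCount {n : ℕ} (H : Matrix (Fin n) (Fin n) ℂ) (d : ℕ) (t : ℝ) : ℕ :=
  Nat.card {p : Finset (Fin n) × Finset (Fin n) //
    ∃ (h₁ : p.1.card = d) (h₂ : p.2.card = d),
      ‖(Matrix.det (H.submatrix
        (fun a => (p.1.orderIsoOfFin h₁ a : Fin n))
        (fun b => (p.2.orderIsoOfFin h₂ b : Fin n))))‖ = t}

/-! `H = P₁ D₁ K D₂ P₂` means that `H i j = d₁ (σ i) * K (σ i) (τ⁻¹ j) * d₂ (τ⁻¹ j)`. Hence the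
minor of `H` on rows `S` and columns `T` is, up to unimodular diagonal factors and a reordering of
rows and columns, the minor of `K` on rows `σ S` and columns `τ⁻¹ T`, and has the same absolute
value. So `(S, T) ↦ (σ S, τ⁻¹ T)` is a bijection between the pairs counted for `H` and for `K`. -/

lemma Function.Injective.exists_equiv_comp_eq_of_range_eq {ι α : Type*} {f f' : ι → α}
    (hf : f.Injective) (hf' : f'.Injective) (hr : Set.range f = Set.range f') :
    ∃ e : ι ≃ ι, f' ∘ e = f :=
  ⟨(Equiv.ofInjective f hf).trans ((Equiv.setCongr hr).trans (Equiv.ofInjective f' hf').symm),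
    funext fun _ => Equiv.apply_ofInjective_symm hf' _⟩

theorem Finset.range_comp_orderEmbOfFin {α β : Type*} [LinearOrder α] (s : Finset α) {k : ℕ}
    (h : s.card = k) (e : α ↪ β) [LinearOrder β] (h' : (s.map e).card = k) :
    Set.range (e ∘ s.orderEmbOfFin h) = Set.range ((s.map e).orderEmbOfFin h') := by
  rw [Set.range_comp, range_orderEmbOfFin, range_orderEmbOfFin, Finset.coe_map]

namespace Matrix

variable {𝕜 : Type*} [NormedField 𝕜] {ι m o : Type*} [Fintype ι] [DecidableEq ι]

theorem norm_det_submatrix_equiv_equiv {n : Type*} [Fintype n] [DecidableEq n] [DecidableEq m]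
    [Fintype m] (e₁ e₂ : n ≃ m) (A : Matrix m m 𝕜) :
    ‖(A.submatrix e₁ e₂).det‖ = ‖A.det‖ := by
  have hsub : A.submatrix e₁ e₂ = (A.submatrix id (e₁.symm.trans e₂)).submatrix e₁ e₁ := by
    ext; simp
  rw [hsub, det_submatrix_equiv_self, det_permute', norm_mul]
  rcases Int.units_eq_one_or (Equiv.Perm.sign (e₁.symm.trans e₂)) with h | h <;> simp [h]

theorem norm_det_submatrix_eq_of_range_eq (A : Matrix m o 𝕜) {f f' : ι → m} {g g' : ι → o}
    (hf : f.Injective) (hf' : f'.Injective) (hg : g.Injective) (hg' : g'.Injective)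
    (hrf : Set.range f = Set.range f') (hrg : Set.range g = Set.range g') :
    ‖(A.submatrix f g).det‖ = ‖(A.submatrix f' g').det‖ := by
  obtain ⟨e₁, rfl⟩ := hf.exists_equiv_comp_eq_of_range_eq hf' hrf
  obtain ⟨e₂, rfl⟩ := hg.exists_equiv_comp_eq_of_range_eq hg' hrg
  rw [← submatrix_submatrix, norm_det_submatrix_equiv_equiv]

theorem norm_det_submatrix_diagonal_mul_mul_diagonal [Fintype m] [DecidableEq m] [Fintype o]
    [DecidableEq o] (A : Matrix m o 𝕜) {a : m → 𝕜} {b : o → 𝕜} (ha : ∀ i, ‖a i‖ = 1)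
    (hb : ∀ j, ‖b j‖ = 1) (f : ι → m) (g : ι → o) :
    ‖((diagonal a * A * diagonal b).submatrix f g).det‖ = ‖(A.submatrix f g).det‖ := by
  have hsub : (diagonal a * A * diagonal b).submatrix f g =
      diagonal (a ∘ f) * A.submatrix f g * diagonal (b ∘ g) := by
    ext i j
    simp [mul_diagonal, diagonal_mul]
  simp [hsub, det_mul, det_diagonal, norm_prod, ha, hb]

theorem permMatrix_mul_mul_permMatrix {n R : Type*} [Fintype n] [DecidableEq n]
    [NonAssocSemiring R] (σ τ : Equiv.Perm n) (A : Matrix n n R) :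
    σ.permMatrix R * A * τ.permMatrix R = A.submatrix σ τ.symm := by
  rw [PEquiv.toMatrix_toPEquiv_mul, PEquiv.mul_toMatrix_toPEquiv, submatrix_submatrix]
  rfl

end Matrix

theorem HadEquiv.exists_norm_det_submatrix_eq {n ι : Type*} [Fintype n] [DecidableEq n]
    [Fintype ι] [DecidableEq ι] {H K : Matrix n n ℂ} (h : HadEquiv H K) :
    ∃ σ τ : Equiv.Perm n, ∀ f g : ι → n,
      ‖(H.submatrix f g).det‖ = ‖(K.submatrix (σ ∘ f) (τ ∘ g)).det‖ := by
  obtain ⟨σ, τ, d₁, d₂, h₁, h₂, rfl⟩ := h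
  refine ⟨σ, τ.symm, fun f g => ?_⟩
  rw [Matrix.mul_assoc _ (diagonal d₁), Matrix.mul_assoc _ (diagonal d₁ * K),
    permMatrix_mul_mul_permMatrix, submatrix_submatrix,
    norm_det_submatrix_diagonal_mul_mul_diagonal K h₁ h₂]

theorem HadEquiv.exists_norm_det_minor_eq {n : Type*} [Fintype n] [DecidableEq n]
    [LinearOrder n] {H K : Matrix n n ℂ} (h : HadEquiv H K) (d : ℕ) :
    ∃ σ τ : Equiv.Perm n, ∀ (S T : Finset n) (hS : S.card = d) (hT : T.card = d)
      (hS' : (S.map σ.toEmbedding).card = d) (hT' : (T.map τ.toEmbedding).card = d),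
      ‖(H.submatrix (S.orderEmbOfFin hS) (T.orderEmbOfFin hT)).det‖ =
        ‖(K.submatrix ((S.map σ.toEmbedding).orderEmbOfFin hS')
          ((T.map τ.toEmbedding).orderEmbOfFin hT')).det‖ := by
  obtain ⟨σ, τ, hminor⟩ := h.exists_norm_det_submatrix_eq (ι := Fin d)
  refine ⟨σ, τ, fun S T hS hT hS' hT' => ?_⟩
  rw [hminor]
  exact norm_det_submatrix_eq_of_range_eq K (σ.injective.comp (S.orderEmbOfFin hS).injective)
    (Finset.orderEmbOfFin _ hS').injective (τ.injective.comp (T.orderEmbOfFin hT).injective)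
    (Finset.orderEmbOfFin _ hT').injective (S.range_comp_orderEmbOfFin hS σ.toEmbedding hS')
    (T.range_comp_orderEmbOfFin hT τ.toEmbedding hT')

theorem stmt13 (n : ℕ) (H K : Matrix (Fin n) (Fin n) ℂ)
    (heq : HadEquiv H K) (d : ℕ) :
    ∀ t : ℝ, 0 ≤ t → minorCount H d t = minorCount K d t := by
  intro t _
  obtain ⟨σ, τ, hminor⟩ := heq.exists_norm_det_minor_eq d
  refine Nat.card_congr (Equiv.subtypeEquiv (σ.finsetCongr.prodCongr τ.finsetCongr) ?_)
  rintro ⟨S, T⟩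
  simp only [Equiv.prodCongr_apply, Prod.map, Equiv.finsetCongr_apply,
    Finset.coe_orderIsoOfFin_apply]
  constructor
  · rintro ⟨hS, hT, rfl⟩
    exact ⟨by simpa using hS, by simpa using hT, (hminor ..).symm⟩
  · rintro ⟨hS', hT', rfl⟩
    exact ⟨by simpa using hS', by simpa using hT', hminor ..⟩
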